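/- In the q-Weyl algebra A_q with relation ∂x = q x ∂ + (q-1) and q a unit, the powers of the Euler operator α = 1 + x∂ form a (left and right) Ore set: for every a ∈ A_q and n ≥ 1 there exist b ∈ A_q and m ≥ 1 with αᵐ a = b αⁿ. -/

import Mathlib

/-- The defining relation of the `q`-Weyl algebra: `∂x = q x∂ + (q-1)·1`. -/
inductive qWeylRel (K : Type) [CommRing K] (q : K) :
    FreeAlgebra K (Fin 2) → FreeAlgebra K (Fin 2) → Prop
  | rel : qWeylRel K q (FreeAlgebra.ι K 1 * FreeAlgebra.ι K 0)
      (q • (FreeAlgebra.ι K 0 * FreeAlgebra.ι K 1) + (q - 1) • (1 : FreeAlgebra K (Fin 2)))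

/-- The `q`-Weyl algebra `A_q = K⟨x,∂⟩/(∂x - q x ∂ = q - 1)`. -/
abbrev qWeyl (K : Type) [CommRing K] (q : K) : Type := RingQuot (qWeylRel K q)

/-- The generator `x` of the `q`-Weyl algebra. -/
noncomputable def qX (K : Type) [CommRing K] (q : K) : qWeyl K q :=
  RingQuot.mkAlgHom K (qWeylRel K q) (FreeAlgebra.ι K 0)

/-- The generator `∂` of the `q`-Weyl algebra. -/
noncomputable def qD (K : Type) [CommRing K] (q : K) : qWeyl K q :=
  RingQuot.mkAlgHom K (qWeylRel K q) (FreeAlgebra.ι K 1)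

/-!
Let `σ` be the automorphism with `σ x = q x`, `σ ∂ = q⁻¹ ∂`. Then `α a = σ(a) α` for every `a`:
it suffices to check this on the generators, where it follows from `∂x = q x∂ + (q - 1)`.
Iterating, `αⁿ a = σⁿ(a) αⁿ`, so `m = n` and `b = σⁿ(a)` work.
-/

theorem SemiconjBy.pow_left_iterate {M : Type*} [Monoid M] {c : M} {f : M → M}
    (h : ∀ a, SemiconjBy c a (f a)) (n : ℕ) (a : M) : SemiconjBy (c ^ n) a (f^[n] a) := by
  induction n with
  | zero => simp
  | succ n ih =>
    rw [pow_succ', Function.iterate_succ_apply']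
    exact (h _).mul_left ih

namespace qWeyl

noncomputable abbrev euler (K : Type) [CommRing K] (q : K) : qWeyl K q :=
  1 + qX K q * qD K q

variable {K : Type} [CommRing K]

theorem qD_mul_qX (q : K) : qD K q * qX K q = q • (qX K q * qD K q) + (q - 1) • 1 := by
  simpa [qX, qD] using RingQuot.mkAlgHom_rel K (qWeylRel.rel (K := K) (q := q))

theorem euler_mul_qX (q : K) : euler K q * qX K q = q • (qX K q * euler K q) :=
  calc euler K q * qX K q = qX K q + qX K q * (qD K q * qX K q) := by noncomm_ring
    _ = q • (qX K q * euler K q) := by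
      rw [qD_mul_qX]
      simp only [euler, mul_add, mul_one, mul_smul_comm, smul_add]
      module

theorem qD_mul_euler (q : K) : qD K q * euler K q = q • (euler K q * qD K q) :=
  calc qD K q * euler K q = qD K q + (qD K q * qX K q) * qD K q := by noncomm_ring
    _ = q • (euler K q * qD K q) := by
      rw [qD_mul_qX]
      simp only [euler, add_mul, one_mul, smul_mul_assoc, smul_add]
      module

variable (u : Kˣ)

noncomputable def scale : qWeyl K u →ₐ[K] qWeyl K u :=
  RingQuot.liftAlgHom K
    ⟨FreeAlgebra.lift K ![(u : K) • qX K u, (↑u⁻¹ : K) • qD K u], by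
      rintro _ _ ⟨⟩
      simp only [map_mul, map_add, map_smul, map_one, FreeAlgebra.lift_ι_apply,
        Matrix.cons_val_zero, Matrix.cons_val_one, smul_mul_smul_comm, Units.inv_mul,
        one_smul, qD_mul_qX, smul_add, smul_smul, Units.mul_inv, one_mul]⟩

@[simp]
theorem scale_qX : scale u (qX K u) = (u : K) • qX K u := by
  simp [scale, qX]

@[simp]
theorem scale_qD : scale u (qD K u) = (↑u⁻¹ : K) • qD K u := by
  simp [scale, qD]

theorem semiconjBy_euler_qX : SemiconjBy (euler K u) (qX K u) ((u : K) • qX K u) := by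
  rw [SemiconjBy, euler_mul_qX, smul_mul_assoc]

theorem semiconjBy_euler_qD : SemiconjBy (euler K u) (qD K u) ((↑u⁻¹ : K) • qD K u) := by
  rw [SemiconjBy, smul_mul_assoc, qD_mul_euler, smul_smul, Units.inv_mul, one_smul]

theorem semiconjBy_euler (a : qWeyl K u) : SemiconjBy (euler K u) a (scale u a) := by
  obtain ⟨f, rfl⟩ := RingQuot.mkAlgHom_surjective K (qWeylRel K u) a
  induction f using FreeAlgebra.induction with
  | grade0 r =>
    rw [AlgHom.commutes, AlgHom.commutes]
    exact Algebra.commute_algebraMap_right r _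
  | grade1 i =>
    fin_cases i
    · show SemiconjBy _ (qX K u) (scale u (qX K u))
      rw [scale_qX]
      exact semiconjBy_euler_qX u
    · show SemiconjBy _ (qD K u) (scale u (qD K u))
      rw [scale_qD]
      exact semiconjBy_euler_qD u
  | add f g hf hg => simpa only [map_add] using hf.add_right hg
  | mul f g hf hg => simpa only [map_mul] using hf.mul_right hg

end qWeyl

/-- In the `q`-Weyl algebra with `q` a unit, the powers of the Euler operator `α = 1 + x∂`
form an Ore set: for every `a` and every `n ≥ 1` there are `b` and `m ≥ 1` with
`αᵐ a = b αⁿ`. -/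
theorem stmt8 (K : Type) [Field K] (q : K) (hq : q ≠ 0) :
    ∀ (a : qWeyl K q) (n : ℕ), 1 ≤ n →
      ∃ (b : qWeyl K q) (m : ℕ), 1 ≤ m ∧
        (1 + qX K q * qD K q) ^ m * a = b * (1 + qX K q * qD K q) ^ n := by
  intro a n hn
  let u := Units.mk0 q hq
  exact ⟨(qWeyl.scale u)^[n] a, n, hn,
    SemiconjBy.pow_left_iterate (qWeyl.semiconjBy_euler u) n a⟩
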